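/- arXiv:1701.04880 — 4 statements merged into one kernel-verified Lean document; each statement's English description precedes it below -/
import Mathlib

section
/- For α ≥ 0, k a nonnegative integer, and γ > 0, the integral ∫_α^∞ x^k · exp(−(log(x−α))²/(2γ²)) dx equals γ√(2π) · Σ_{i=0}^{k} C(k,i) · α^{k−i} · exp((i+1)²γ²/2). -/
open Real MeasureTheory

/-! Substituting `x = α + exp t` turns the integral into
`∫ exp t (α + exp t)^k exp(-t²/(2γ²)) dt`. Expanding `(α + exp t)^k` by the binomial theorem
leaves Gaussian integrals of `exp((i+1) t)`, each of which is `γ √(2π) exp((i+1)² γ² / 2)`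
by completing the square. -/

theorem integral_Ioi_eq_integral_exp_smul_comp_add_exp {E : Type*} [NormedAddCommGroup E]
    [NormedSpace ℝ E] (f : ℝ → E) (α : ℝ) :
    ∫ x in Set.Ioi α, f x = ∫ t, exp t • f (α + exp t) := by
  have hrange : (fun t ↦ α + exp t) '' Set.univ = Set.Ioi α := by
    ext x
    refine ⟨?_, fun hx ↦ ⟨log (x - α), trivial, by simp [exp_log (sub_pos.2 hx)]⟩⟩
    rintro ⟨t, -, rfl⟩
    simpa using exp_pos t
  rw [← hrange, integral_image_eq_integral_abs_deriv_smul MeasurableSet.univ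
    (fun t _ ↦ ((hasDerivAt_exp t).const_add α).hasDerivWithinAt)
    (fun s _ t _ h ↦ exp_injective (add_left_cancel h)), setIntegral_univ]
  simp only [abs_of_pos (exp_pos _)]

theorem exp_mul_add_exp_pow (α t : ℝ) (k : ℕ) :
    exp t * (α + exp t) ^ k =
      ∑ i ∈ Finset.range (k + 1),
        (k.choose i : ℝ) * α ^ (k - i) * exp (((i : ℝ) + 1) * t) := by
  rw [add_comm, add_pow, Finset.mul_sum]
  refine Finset.sum_congr rfl fun i _ ↦ ?_
  rw [add_mul, one_mul, exp_add, ← exp_nat_mul]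
  ring

section Gaussian

variable {γ : ℝ}

theorem exp_mul_mul_exp_neg_sq_div_eq (hγ : γ ≠ 0) (a t : ℝ) :
    exp (a * t) * exp (-t ^ 2 / (2 * γ ^ 2)) =
      exp (a ^ 2 * γ ^ 2 / 2) * exp (-(1 / (2 * γ ^ 2)) * (t - a * γ ^ 2) ^ 2) := by
  rw [← exp_add, ← exp_add]
  congr 1
  field_simp
  ring

theorem integrable_exp_mul_mul_exp_neg_sq_div (hγ : γ ≠ 0) (a : ℝ) :
    Integrable fun t ↦ exp (a * t) * exp (-t ^ 2 / (2 * γ ^ 2)) := by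
  simp only [exp_mul_mul_exp_neg_sq_div_eq hγ]
  exact ((integrable_exp_neg_mul_sq (by positivity)).comp_sub_right _).const_mul _

theorem integral_exp_mul_mul_exp_neg_sq_div (hγ : 0 < γ) (a : ℝ) :
    ∫ t, exp (a * t) * exp (-t ^ 2 / (2 * γ ^ 2)) =
      γ * √(2 * π) * exp (a ^ 2 * γ ^ 2 / 2) := by
  simp only [exp_mul_mul_exp_neg_sq_div_eq hγ.ne']
  rw [integral_const_mul,
    integral_sub_right_eq_self (fun t ↦ exp (-(1 / (2 * γ ^ 2)) * t ^ 2)),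
    integral_gaussian, div_div_eq_mul_div, div_one, ← mul_assoc, mul_comm π,
    sqrt_mul' _ (by positivity), sqrt_sq hγ.le]
  ring

end Gaussian

theorem gels_normalizing_integral_general (α γ : ℝ) (k : ℕ) (hγ : 0 < γ) :
    ∫ x in Set.Ioi α, x ^ k * Real.exp (-(Real.log (x - α)) ^ 2 / (2 * γ ^ 2)) =
      γ * Real.sqrt (2 * Real.pi) *
        ∑ i ∈ Finset.range (k + 1),
          (k.choose i : ℝ) * α ^ (k - i) * Real.exp (((i : ℝ) + 1) ^ 2 * γ ^ 2 / 2) := by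
  have hexpand : ∀ t : ℝ,
      exp t * ((α + exp t) ^ k * exp (-log (α + exp t - α) ^ 2 / (2 * γ ^ 2))) =
        ∑ i ∈ Finset.range (k + 1), (k.choose i : ℝ) * α ^ (k - i) *
          (exp (((i : ℝ) + 1) * t) * exp (-t ^ 2 / (2 * γ ^ 2))) := fun t ↦ by
    rw [add_sub_cancel_left, log_exp, ← mul_assoc, exp_mul_add_exp_pow, Finset.sum_mul]
    simp only [mul_assoc]
  rw [integral_Ioi_eq_integral_exp_smul_comp_add_exp]
  simp only [smul_eq_mul, hexpand]
  rw [integral_finsetSum _ fun i _ ↦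
    (integrable_exp_mul_mul_exp_neg_sq_div hγ.ne' _).const_mul _, Finset.mul_sum]
  refine Finset.sum_congr rfl fun i _ ↦ ?_
  rw [integral_const_mul, integral_exp_mul_mul_exp_neg_sq_div hγ]
  ring

theorem gels_normalizing_integral (α γ : ℝ) (k : ℕ) (hα : 0 ≤ α) (hγ : 0 < γ) :
    ∫ x in Set.Ioi α, x ^ k * Real.exp (-(Real.log (x - α)) ^ 2 / (2 * γ ^ 2)) =
      γ * Real.sqrt (2 * Real.pi) *
        ∑ i ∈ Finset.range (k + 1),
          (k.choose i : ℝ) * α ^ (k - i) * Real.exp (((i : ℝ) + 1) ^ 2 * γ ^ 2 / 2) :=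
  gels_normalizing_integral_general α γ k hγ
end

section
/- For α ≥ 0, k a nonnegative integer, γ > 0, and x > α, ∫_α^x w^k · exp(−(log(w−α))²/(2γ²)) dw = γ√(2π) · Σ_{i=0}^{k} C(k,i) · α^{k−i} · exp((i+1)²γ²/2) · Φ((log(x−α) − (i+1)γ²)/γ), where Φ is the standard normal cdf. -/
/-!
Shifting `w = α + t` and expanding `(t + α) ^ k` binomially reduces the integral to the moments
`∫₀^X t ^ i exp (-(log t)² / (2γ²)) dt`. The substitution `t = exp (γ v + (i + 1) γ²)` completes
the square in the exponent: the integrand becomes `γ exp ((i + 1)² γ² / 2) exp (-v² / 2)` on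
`v ≤ (log X - (i + 1) γ²) / γ`, a multiple of the standard normal cdf.
-/

open Real MeasureTheory

/-- The standard normal cumulative distribution function. -/
noncomputable def stdNormalCdf (t : ℝ) : ℝ :=
  (Real.sqrt (2 * Real.pi))⁻¹ * ∫ u in Set.Iic t, Real.exp (-u ^ 2 / 2)

open Set

lemma image_exp_affine_Iic {γ : ℝ} (hγ : 0 < γ) (a L : ℝ) :
    (fun v => exp (γ * v + a)) '' Iic L = Ioc 0 (exp (γ * L + a)) := by
  rw [show (fun v => exp (γ * v + a)) = exp ∘ (· + a) ∘ (γ * ·) from rfl, image_comp, image_comp,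
    image_mul_left_Iic hγ, image_add_const_Iic, image_exp_Iic]

theorem integral_Ioc_zero_eq_integral_Iic_exp_affine (f : ℝ → ℝ) {γ : ℝ} (hγ : 0 < γ) (a : ℝ)
    {X : ℝ} (hX : 0 < X) :
    ∫ t in Ioc 0 X, f t =
      ∫ v in Iic ((log X - a) / γ), γ * exp (γ * v + a) * f (exp (γ * v + a)) := by
  have hderiv (v : ℝ) : HasDerivAt (fun v => exp (γ * v + a)) (exp (γ * v + a) * γ) v :=
    (((hasDerivAt_id v).const_mul γ).add_const a).exp.congr_deriv (by simp)
  have hinj : StrictMono (fun v => exp (γ * v + a)) :=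
    exp_strictMono.comp ((strictMono_mul_left_of_pos hγ).add_const a)
  conv_lhs => rw [← exp_log hX, show log X = γ * ((log X - a) / γ) + a by field_simp; ring,
    ← image_exp_affine_Iic hγ]
  rw [integral_image_eq_integral_abs_deriv_smul measurableSet_Iic
    (fun v _ => (hderiv v).hasDerivWithinAt) hinj.injective.injOn]
  congr 1 with v
  rw [abs_of_pos (by positivity), smul_eq_mul]
  ring

lemma exp_affine_mul_pow_mul_exp_neg_log_sq {γ : ℝ} (hγ : 0 < γ) (i : ℕ) (v : ℝ) :
    let t := exp (γ * v + (i + 1) * γ ^ 2)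
    γ * t * (t ^ i * exp (-log t ^ 2 / (2 * γ ^ 2))) =
      γ * exp ((i + 1) ^ 2 * γ ^ 2 / 2) * exp (-v ^ 2 / 2) := by
  intro t
  rw [log_exp, ← exp_nat_mul, mul_assoc, ← exp_add, ← exp_add, mul_assoc, ← exp_add]
  congr 2
  field_simp
  ring

theorem integral_Ioc_zero_pow_mul_exp_neg_log_sq {γ : ℝ} (hγ : 0 < γ) (i : ℕ) {X : ℝ}
    (hX : 0 < X) :
    ∫ t in Ioc 0 X, t ^ i * exp (-log t ^ 2 / (2 * γ ^ 2)) =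
      γ * √(2 * π) * exp ((i + 1) ^ 2 * γ ^ 2 / 2) *
        stdNormalCdf ((log X - (i + 1) * γ ^ 2) / γ) := by
  rw [integral_Ioc_zero_eq_integral_Iic_exp_affine _ hγ ((i + 1) * γ ^ 2) hX]
  simp only [exp_affine_mul_pow_mul_exp_neg_log_sq hγ]
  rw [integral_const_mul, stdNormalCdf]
  field_simp

theorem integrableOn_pow_mul_exp_neg_log_sq (γ : ℝ) (i : ℕ) (a b : ℝ) :
    IntegrableOn (fun t => t ^ i * exp (-log t ^ 2 / (2 * γ ^ 2))) (Ioc a b) := by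
  refine (continuous_pow i).integrableOn_Ioc.mul_bdd (c := 1) (by fun_prop) ?_
  refine Filter.Eventually.of_forall fun t => ?_
  rw [norm_of_nonneg (exp_pos _).le, exp_le_one_iff]
  exact div_nonpos_of_nonpos_of_nonneg (neg_nonpos.2 (sq_nonneg _)) (by positivity)

theorem gels_cdf_integral_general (α γ x : ℝ) (k : ℕ) (hγ : 0 < γ) (hx : α < x) :
    ∫ w in α..x, w ^ k * Real.exp (-(Real.log (w - α)) ^ 2 / (2 * γ ^ 2)) =
      γ * Real.sqrt (2 * Real.pi) *
        ∑ i ∈ Finset.range (k + 1),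
          (k.choose i : ℝ) * α ^ (k - i) * Real.exp (((i : ℝ) + 1) ^ 2 * γ ^ 2 / 2) *
            stdNormalCdf ((Real.log (x - α) - ((i : ℝ) + 1) * γ ^ 2) / γ) := by
  have hshift : ∫ w in α..x, w ^ k * exp (-log (w - α) ^ 2 / (2 * γ ^ 2)) =
      ∫ t in 0..x - α, (t + α) ^ k * exp (-log t ^ 2 / (2 * γ ^ 2)) := by
    simpa using intervalIntegral.integral_comp_sub_right (a := α) (b := x)
      (fun t => (t + α) ^ k * exp (-log t ^ 2 / (2 * γ ^ 2))) α
  have hbinom (t : ℝ) : (t + α) ^ k * exp (-log t ^ 2 / (2 * γ ^ 2)) =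
      ∑ i ∈ Finset.range (k + 1),
        (k.choose i * α ^ (k - i)) * (t ^ i * exp (-log t ^ 2 / (2 * γ ^ 2))) := by
    rw [add_pow, Finset.sum_mul]
    exact Finset.sum_congr rfl fun _ _ => by ring
  rw [hshift, intervalIntegral.integral_of_le (sub_nonneg.2 hx.le)]
  simp only [hbinom]
  rw [integral_finsetSum _ fun i _ => (integrableOn_pow_mul_exp_neg_log_sq γ i _ _).const_mul _,
    Finset.mul_sum]
  refine Finset.sum_congr rfl fun i _ => ?_
  rw [integral_const_mul, integral_Ioc_zero_pow_mul_exp_neg_log_sq hγ i (sub_pos.2 hx)]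
  ring

theorem gels_cdf_integral (α γ x : ℝ) (k : ℕ) (hα : 0 ≤ α) (hγ : 0 < γ) (hx : α < x) :
    ∫ w in α..x, w ^ k * Real.exp (-(Real.log (w - α)) ^ 2 / (2 * γ ^ 2)) =
      γ * Real.sqrt (2 * Real.pi) *
        ∑ i ∈ Finset.range (k + 1),
          (k.choose i : ℝ) * α ^ (k - i) * Real.exp (((i : ℝ) + 1) ^ 2 * γ ^ 2 / 2) *
            stdNormalCdf ((Real.log (x - α) - ((i : ℝ) + 1) * γ ^ 2) / γ) :=
  gels_cdf_integral_general α γ x k hγ hx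
end

section
/- For α ≥ 0, k a nonnegative integer, γ > 0, and x > α, ∫_x^∞ w^k · exp(−(log(w−α))²/(2γ²)) dw = γ√(2π) · Σ_{i=0}^{k} C(k,i) · α^{k−i} · exp((i+1)²γ²/2) · Φ(−(log(x−α) − (i+1)γ²)/γ). -/
open Real MeasureTheory

/-!
Substituting `w = α + exp t` turns the integral into
`∫_{log (x - α)}^∞ (α + eᵗ)ᵏ eᵗ exp (-t² / (2γ²)) dt`. Expanding `(α + eᵗ)ᵏ` binomially leaves
the integrals `∫_L^∞ exp ((i + 1) t - t² / (2γ²)) dt`, and completing the square makes each of them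
a Gaussian tail, i.e. a value of `1 - Φ = Φ(-·)`.
-/

open Set

section ChangeOfVariables

variable {E : Type*} [NormedAddCommGroup E] [NormedSpace ℝ E]

theorem setIntegral_Ioi_comp_const_add (g : ℝ → E) (c a : ℝ) :
    ∫ y in Ioi a, g (c + y) = ∫ w in Ioi (c + a), g w := by
  rw [← image_const_add_Ioi,
    integral_image_eq_integral_abs_deriv_smul (f := (c + ·)) measurableSet_Ioi
      (fun y _ ↦ ((hasDerivAt_id y).const_add c).hasDerivWithinAt)
      (add_right_injective c).injOn g]
  simp

theorem setIntegral_Ioi_eq_integral_comp_const_add_exp (g : ℝ → E) {α x : ℝ} (hx : α < x) :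
    ∫ w in Ioi x, g w = ∫ t in Ioi (log (x - α)), exp t • g (α + exp t) := by
  rw [integral_comp_exp_Ioi (fun y ↦ g (α + y)), exp_log (sub_pos.mpr hx),
    setIntegral_Ioi_comp_const_add, add_sub_cancel]

end ChangeOfVariables

theorem integral_Ioi_exp_neg_sq_div_two (a : ℝ) :
    ∫ u in Ioi a, exp (-u ^ 2 / 2) = √(2 * π) * stdNormalCdf (-a) := by
  have hsqrt : √(2 * π) ≠ 0 := by positivity
  rw [stdNormalCdf, mul_inv_cancel_left₀ hsqrt, ← integral_comp_neg_Ioi]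
  simp only [even_two, Even.neg_pow]

theorem exp_mul_sub_sq_div_eq {γ : ℝ} (hγ : γ ≠ 0) (b t : ℝ) :
    exp (b * t - t ^ 2 / (2 * γ ^ 2)) =
      exp (b ^ 2 * γ ^ 2 / 2) * exp (-(2 * γ ^ 2)⁻¹ * (t - b * γ ^ 2) ^ 2) := by
  rw [← exp_add]
  congr 1
  field_simp
  ring

theorem integrable_exp_mul_sub_sq_div {γ : ℝ} (hγ : γ ≠ 0) (b : ℝ) :
    Integrable fun t ↦ exp (b * t - t ^ 2 / (2 * γ ^ 2)) := by
  simp_rw [exp_mul_sub_sq_div_eq hγ]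
  exact ((integrable_exp_neg_mul_sq (by positivity)).comp_sub_right _).const_mul _

theorem integral_Ioi_exp_mul_sub_sq_div {γ : ℝ} (hγ : 0 < γ) (b L : ℝ) :
    ∫ t in Ioi L, exp (b * t - t ^ 2 / (2 * γ ^ 2)) =
      γ * √(2 * π) * exp (b ^ 2 * γ ^ 2 / 2) * stdNormalCdf (-((L - b * γ ^ 2) / γ)) := by
  set a := (L - b * γ ^ 2) / γ
  have hL : L = b * γ ^ 2 + γ * a := by
    simp only [a]
    field_simp
    ring
  have hstd : ∀ u, exp (b * (b * γ ^ 2 + γ * u) - (b * γ ^ 2 + γ * u) ^ 2 / (2 * γ ^ 2)) =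
      exp (b ^ 2 * γ ^ 2 / 2) * exp (-u ^ 2 / 2) := by
    intro u
    rw [exp_mul_sub_sq_div_eq hγ.ne']
    congr 2
    field_simp
    ring
  rw [hL, ← setIntegral_Ioi_comp_const_add, ← integral_comp_mul_left_Ioi' _ _ hγ]
  simp only [hstd, integral_const_mul, integral_Ioi_exp_neg_sq_div_two, smul_eq_mul]
  ring

theorem gels_sf_integral_general (α γ x : ℝ) (k : ℕ) (hγ : 0 < γ) (hx : α < x) :
    ∫ w in Set.Ioi x, w ^ k * Real.exp (-(Real.log (w - α)) ^ 2 / (2 * γ ^ 2)) =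
      γ * Real.sqrt (2 * Real.pi) *
        ∑ i ∈ Finset.range (k + 1),
          (k.choose i : ℝ) * α ^ (k - i) * Real.exp (((i : ℝ) + 1) ^ 2 * γ ^ 2 / 2) *
            stdNormalCdf (-((Real.log (x - α) - ((i : ℝ) + 1) * γ ^ 2) / γ)) := by
  have hexpand : ∀ t : ℝ,
      exp t • ((α + exp t) ^ k * exp (-log (α + exp t - α) ^ 2 / (2 * γ ^ 2))) =
        ∑ i ∈ Finset.range (k + 1), (k.choose i : ℝ) * α ^ (k - i) *
          exp (((i : ℝ) + 1) * t - t ^ 2 / (2 * γ ^ 2)) := by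
    intro t
    rw [add_sub_cancel_left, log_exp, add_comm, add_pow, smul_eq_mul, Finset.sum_mul,
      Finset.mul_sum]
    refine Finset.sum_congr rfl fun i _ ↦ ?_
    rw [← exp_nat_mul, sub_eq_add_neg, exp_add, add_mul, exp_add, one_mul, neg_div]
    ring
  rw [setIntegral_Ioi_eq_integral_comp_const_add_exp _ hx]
  simp only [hexpand]
  rw [integral_finsetSum _ fun i _ ↦
    ((integrable_exp_mul_sub_sq_div hγ.ne' _).integrableOn).const_mul _, Finset.mul_sum]
  refine Finset.sum_congr rfl fun i _ ↦ ?_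
  rw [integral_const_mul, integral_Ioi_exp_mul_sub_sq_div hγ]
  ring

theorem gels_sf_integral (α γ x : ℝ) (k : ℕ) (hα : 0 ≤ α) (hγ : 0 < γ) (hx : α < x) :
    ∫ w in Set.Ioi x, w ^ k * Real.exp (-(Real.log (w - α)) ^ 2 / (2 * γ ^ 2)) =
      γ * Real.sqrt (2 * Real.pi) *
        ∑ i ∈ Finset.range (k + 1),
          (k.choose i : ℝ) * α ^ (k - i) * Real.exp (((i : ℝ) + 1) ^ 2 * γ ^ 2 / 2) *
            stdNormalCdf (-((Real.log (x - α) - ((i : ℝ) + 1) * γ ^ 2) / γ)) :=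
  gels_sf_integral_general α γ x k hγ hx
end

section
/- Let X be a random variable with density f(x) = C · x^k · exp(−(log(x−α))²/(2γ²)) on (α, ∞), where α ≥ 0, k is a nonnegative integer, γ > 0, and C = (γ√(2π) · Σ_{i=0}^{k} C(k,i) α^{k−i} e^{(i+1)²γ²/2})^{−1}. Then for every nonnegative integer n, E[X^n] = Cγ√(2π) · Σ_{i=0}^{n+k} C(n+k,i) · α^{n+k−i} · e^{(i+1)²γ²/2}. -/
/-!
Substituting `x = α + exp u` turns `∫_{x > α} x ^ m exp (-(log (x - α))² / (2γ²)) dx` into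
`∫ exp u (α + exp u) ^ m exp (-u² / (2γ²)) du`. Expanding `(α + exp u) ^ m` binomially, the
`i`-th term is a Gaussian with linear part `(i + 1) u`, and completing the square gives
`γ √(2π) exp ((i + 1)² γ² / 2)`. The `n`-th moment is `C` times this integral with `m = n + k`.
-/

open Real MeasureTheory Set

lemma neg_mul_sq_add_mul_eq {b : ℝ} (hb : b ≠ 0) (a u : ℝ) :
    -b * u ^ 2 + a * u = -b * (u - a / (2 * b)) ^ 2 + a ^ 2 / (4 * b) := by
  field_simp; ring

lemma integrable_exp_neg_mul_sq_add_mul {b : ℝ} (hb : 0 < b) (a : ℝ) :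
    Integrable fun u : ℝ => exp (-b * u ^ 2 + a * u) := by
  simp_rw [neg_mul_sq_add_mul_eq hb.ne' a, exp_add]
  exact ((integrable_exp_neg_mul_sq hb).comp_sub_right _).mul_const _

lemma integral_exp_neg_mul_sq_add_mul {b : ℝ} (hb : 0 < b) (a : ℝ) :
    ∫ u : ℝ, exp (-b * u ^ 2 + a * u) = √(π / b) * exp (a ^ 2 / (4 * b)) := by
  simp_rw [neg_mul_sq_add_mul_eq hb.ne' a, exp_add, integral_mul_const]
  rw [integral_sub_right_eq_self (fun v => exp (-b * v ^ 2)), integral_gaussian]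

lemma integral_Ioi_eq_integral_exp_smul {E : Type*} [NormedAddCommGroup E] [NormedSpace ℝ E]
    (a : ℝ) (g : ℝ → E) :
    ∫ x in Ioi a, g x = ∫ u, exp u • g (a + exp u) := by
  have himage : (fun u => a + exp u) '' univ = Ioi a := by
    rw [image_univ, range_comp' (a + ·) exp, range_exp, image_const_add_Ioi, add_zero]
  rw [← himage, integral_image_eq_integral_abs_deriv_smul MeasurableSet.univ
    (fun u _ => ((hasDerivAt_exp u).const_add a).hasDerivWithinAt)
    (fun u _ v _ h => exp_injective (add_left_cancel h)), Measure.restrict_univ]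
  simp only [abs_of_pos (exp_pos _)]

lemma integral_Ioi_pow_mul_exp_neg_log_sub_sq (a : ℝ) {γ : ℝ} (hγ : 0 < γ) (m : ℕ) :
    ∫ x in Ioi a, x ^ m * exp (-log (x - a) ^ 2 / (2 * γ ^ 2)) =
      γ * √(2 * π) * ∑ i ∈ Finset.range (m + 1),
        (m.choose i : ℝ) * a ^ (m - i) * exp (((i : ℝ) + 1) ^ 2 * γ ^ 2 / 2) := by
  set b : ℝ := 1 / (2 * γ ^ 2)
  have hb : 0 < b := by positivity
  have hexpand : ∀ u : ℝ, exp u * ((a + exp u) ^ m * exp (-log (a + exp u - a) ^ 2 / (2 * γ ^ 2)))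
      = ∑ i ∈ Finset.range (m + 1),
          (m.choose i : ℝ) * a ^ (m - i) * exp (-b * u ^ 2 + ((i : ℝ) + 1) * u) := by
    intro u
    rw [add_sub_cancel_left, log_exp, add_comm a, add_pow, Finset.sum_mul, Finset.mul_sum]
    refine Finset.sum_congr rfl fun i _ => ?_
    rw [show -b * u ^ 2 + ((i : ℝ) + 1) * u = -u ^ 2 / (2 * γ ^ 2) + i * u + u by
        simp only [b]; ring,
      exp_add, exp_add, exp_nat_mul]
    ring
  rw [integral_Ioi_eq_integral_exp_smul]
  simp_rw [smul_eq_mul, hexpand]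
  rw [integral_finsetSum _ fun i _ => (integrable_exp_neg_mul_sq_add_mul hb _).const_mul _]
  simp_rw [integral_const_mul, integral_exp_neg_mul_sq_add_mul hb, Finset.mul_sum]
  have hsqrt : √(π / b) = γ * √(2 * π) := by
    rw [show π / b = γ ^ 2 * (2 * π) by simp only [b]; field_simp, sqrt_mul (sq_nonneg γ),
      sqrt_sq hγ.le]
  refine Finset.sum_congr rfl fun i _ => ?_
  rw [hsqrt, show ((i : ℝ) + 1) ^ 2 / (4 * b) = ((i : ℝ) + 1) ^ 2 * γ ^ 2 / 2 by
    simp only [b]; field_simp; ring]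
  ring

lemma integral_comp_eq_integral_smul_of_map_eq_withDensity {Ω β E : Type*} [MeasurableSpace Ω]
    [MeasurableSpace β] [NormedAddCommGroup E] [NormedSpace ℝ E] {ℙ : Measure Ω} {μ : Measure β}
    {X : Ω → β} (hX : Measurable X) {f : β → ℝ} (hf : Measurable f) (hf_nonneg : ∀ x, 0 ≤ f x)
    (hmap : ℙ.map X = μ.withDensity fun x => ENNReal.ofReal (f x))
    {g : β → E} (hg : StronglyMeasurable g) :
    ∫ ω, g (X ω) ∂ℙ = ∫ x, f x • g x ∂μ := by
  rw [← integral_map hX.aemeasurable hg.aestronglyMeasurable, hmap,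
    integral_withDensity_eq_integral_toReal_smul hf.ennreal_ofReal
      (ae_of_all _ fun _ => ENNReal.ofReal_lt_top)]
  simp only [ENNReal.toReal_ofReal (hf_nonneg _)]

theorem gels_moments_general {Ω : Type*} [MeasurableSpace Ω] (ℙ : Measure Ω)
    (X : Ω → ℝ) (hX : Measurable X) (α γ C : ℝ) (k : ℕ) (hα : 0 ≤ α) (hγ : 0 < γ)
    (hC : C = (γ * Real.sqrt (2 * Real.pi) *
      ∑ i ∈ Finset.range (k + 1),
        (k.choose i : ℝ) * α ^ (k - i) * Real.exp (((i : ℝ) + 1) ^ 2 * γ ^ 2 / 2))⁻¹)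
    (hpdf : Measure.map X ℙ = volume.withDensity (fun x => ENNReal.ofReal
      (Set.indicator (Set.Ioi α)
        (fun x => C * x ^ k * Real.exp (-(Real.log (x - α)) ^ 2 / (2 * γ ^ 2))) x))) :
    ∀ n : ℕ, ∫ ω, (X ω) ^ n ∂ℙ =
      C * γ * Real.sqrt (2 * Real.pi) *
        ∑ i ∈ Finset.range (n + k + 1),
          ((n + k).choose i : ℝ) * α ^ (n + k - i) *
            Real.exp (((i : ℝ) + 1) ^ 2 * γ ^ 2 / 2) := by
  intro n
  have hC_nonneg : 0 ≤ C := by rw [hC]; positivity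
  have hdensity_nonneg : ∀ x, 0 ≤ (Ioi α).indicator
      (fun x => C * x ^ k * exp (-log (x - α) ^ 2 / (2 * γ ^ 2))) x :=
    fun x => indicator_nonneg (fun y (hy : α < y) => by have := hα.trans hy.le; positivity) x
  rw [integral_comp_eq_integral_smul_of_map_eq_withDensity hX
    (Measurable.indicator (by fun_prop) measurableSet_Ioi) hdensity_nonneg hpdf
    (continuous_pow n).stronglyMeasurable]
  simp_rw [smul_eq_mul, ← indicator_mul_left _ _ (· ^ n)]
  rw [integral_indicator measurableSet_Ioi]
  have hintegrand : ∀ x : ℝ, C * x ^ k * exp (-log (x - α) ^ 2 / (2 * γ ^ 2)) * x ^ n =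
      C * (x ^ (n + k) * exp (-log (x - α) ^ 2 / (2 * γ ^ 2))) := fun x => by ring
  simp_rw [hintegrand]
  rw [integral_const_mul, integral_Ioi_pow_mul_exp_neg_log_sub_sq α hγ]
  ring

theorem gels_moments {Ω : Type*} [MeasurableSpace Ω] (ℙ : Measure Ω) [IsProbabilityMeasure ℙ]
    (X : Ω → ℝ) (hX : Measurable X) (α γ C : ℝ) (k : ℕ) (hα : 0 ≤ α) (hγ : 0 < γ)
    (hC : C = (γ * Real.sqrt (2 * Real.pi) *
      ∑ i ∈ Finset.range (k + 1),
        (k.choose i : ℝ) * α ^ (k - i) * Real.exp (((i : ℝ) + 1) ^ 2 * γ ^ 2 / 2))⁻¹)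
    (hpdf : Measure.map X ℙ = volume.withDensity (fun x => ENNReal.ofReal
      (Set.indicator (Set.Ioi α)
        (fun x => C * x ^ k * Real.exp (-(Real.log (x - α)) ^ 2 / (2 * γ ^ 2))) x))) :
    ∀ n : ℕ, ∫ ω, (X ω) ^ n ∂ℙ =
      C * γ * Real.sqrt (2 * Real.pi) *
        ∑ i ∈ Finset.range (n + k + 1),
          ((n + k).choose i : ℝ) * α ^ (n + k - i) *
            Real.exp (((i : ℝ) + 1) ^ 2 * γ ^ 2 / 2) :=
  gels_moments_general ℙ X hX α γ C k hα hγ hC hpdf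
end
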